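/- arXiv:1304.5641 — 2 statements merged into one kernel-verified Lean document; each statement's English description precedes it below -/
import Mathlib

section
/- Midpoint collinear insertion in general changes the Bézier curve: let P₀, P₁, P₂ ∈ ℝ² satisfy 2·P₁ ≠ P₀ + P₂, let B₂(t) = ∑_{m=0}^{2} C(2,m) t^m (1−t)^{2−m} P_m be the degree-2 Bézier curve on P₀,P₁,P₂, and let B₄(t) = ∑_{m=0}^{4} C(4,m) t^m (1−t)^{4−m} Q_m be the degree-4 Bézier curve on the midpoint-refined control points Q₀ = P₀, Q₁ = (P₀+P₁)/2, Q₂ = P₁, Q₃ = (P₁+P₂)/2, Q₄ = P₂. Then B₄(1/2) − B₂(1/2) = (2·P₁ − P₀ − P₂)/16, and in particular B₄(1/2) ≠ B₂(1/2), so the two Bézier curves are distinct functions on [0,1]. -/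
/-!
At `t = 1/2` every Bernstein weight of degree `n` is `C(n,m)/2ⁿ`, so both curves are explicit
averages of their control points there: `(P₀ + 2P₁ + P₂)/4` and `(Q₀ + 4Q₁ + 6Q₂ + 4Q₃ + Q₄)/16`.
Substituting the midpoints, the second equals `(3P₀ + 10P₁ + 3P₂)/16`, which exceeds the first
by `(2P₁ - P₀ - P₂)/16`; this is nonzero exactly when `P₁` is not the midpoint of `P₀P₂`.
-/

/-- Points in the Euclidean plane. -/
local notation "ℝ²" => EuclideanSpace ℝ (Fin 2)

/-- The Bézier curve of degree `n` with control points `P 0, …, P n`: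
`B(t) = ∑ₘ C(n,m) tᵐ (1-t)^(n-m) • P m`. -/
noncomputable def bezier {n : ℕ} {V : Type*} [AddCommGroup V] [Module ℝ V]
    (P : Fin (n + 1) → V) (t : ℝ) : V :=
  ∑ m : Fin (n + 1),
    ((n.choose m.val : ℝ) * t ^ m.val * (1 - t) ^ (n - m.val)) • P m

section

variable {V : Type*} [AddCommGroup V] [Module ℝ V]

theorem bezier_quadratic_apply_half (P : Fin 3 → V) :
    bezier P (1 / 2) = (4 : ℝ)⁻¹ • (P 0 + 2 • P 1 + P 2) := by
  rw [bezier, Fin.sum_univ_three]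
  norm_num [Nat.choose]
  module

theorem bezier_quartic_apply_half (Q : Fin 5 → V) :
    bezier Q (1 / 2) = (16 : ℝ)⁻¹ • (Q 0 + 4 • Q 1 + 6 • Q 2 + 4 • Q 3 + Q 4) := by
  rw [bezier, Fin.sum_univ_five]
  norm_num [Nat.choose]
  module

theorem bezier_midpoint_refinement_sub_apply_half (P : Fin 3 → V) (Q : Fin 5 → V)
    (hQ0 : Q 0 = P 0) (hQ1 : Q 1 = midpoint ℝ (P 0) (P 1)) (hQ2 : Q 2 = P 1)
    (hQ3 : Q 3 = midpoint ℝ (P 1) (P 2)) (hQ4 : Q 4 = P 2) :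
    bezier Q (1 / 2) - bezier P (1 / 2) = (16 : ℝ)⁻¹ • (2 • P 1 - P 0 - P 2) := by
  rw [bezier_quartic_apply_half, bezier_quadratic_apply_half, hQ0, hQ1, hQ2, hQ3, hQ4,
    midpoint_eq_smul_add, midpoint_eq_smul_add, invOf_eq_inv]
  module

end

/-- Midpoint collinear insertion in general changes the Bézier curve: if
`2 • P 1 ≠ P 0 + P 2`, then the degree-4 Bézier curve on the midpoint-refined
control points `P 0, (P 0 + P 1)/2, P 1, (P 1 + P 2)/2, P 2` differs from the
degree-2 Bézier curve on `P 0, P 1, P 2` at `t = 1/2`, the difference there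
being `(2 • P 1 - P 0 - P 2) / 16`; in particular the two curves are distinct
functions on `[0,1]`. -/
theorem bezier_midpoint_insertion_changes_curve (P : Fin 3 → ℝ²)
    (hP : 2 • P 1 ≠ P 0 + P 2) (Q : Fin 5 → ℝ²)
    (hQ0 : Q 0 = P 0) (hQ1 : Q 1 = midpoint ℝ (P 0) (P 1)) (hQ2 : Q 2 = P 1)
    (hQ3 : Q 3 = midpoint ℝ (P 1) (P 2)) (hQ4 : Q 4 = P 2) :
    bezier Q (1 / 2) - bezier P (1 / 2)
        = (16 : ℝ)⁻¹ • (2 • P 1 - P 0 - P 2)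
    ∧ bezier Q (1 / 2) ≠ bezier P (1 / 2)
    ∧ ¬ (∀ t ∈ Set.Icc (0 : ℝ) 1, bezier Q t = bezier P t) := by
  have hdiff := bezier_midpoint_refinement_sub_apply_half P Q hQ0 hQ1 hQ2 hQ3 hQ4
  have hdefect : 2 • P 1 - P 0 - P 2 ≠ 0 := by
    rwa [sub_sub, sub_ne_zero]
  have hne : bezier Q (1 / 2) ≠ bezier P (1 / 2) := by
    rw [← sub_ne_zero, hdiff]
    exact smul_ne_zero (by norm_num) hdefect
  exact ⟨hdiff, hne, fun h => hne (h _ ⟨by norm_num, by norm_num⟩)⟩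
end

section
/- The perturbed control polygon 𝒫₂ is a simple closed polygon: with the seven explicit vertices v′₀ = (1.3076, −3.3320, −2.5072), v₁ = (−1.3841185, 4.6825505, 0.913541), v₂ = (−3.2983075, −4.0566825, 2.686189), v₃ = (−0.1232995, 2.768254, −2.463584), v₄ = (3.9079915, −4.533357, 1.2263705), v₅ = (−3.935983, −0.438272, −0.983365), v₆ = (3.218174, 4.296123, 2.1124595) in ℝ³, and edges eᵢ = segment ℝ (uᵢ) (u_{(i+1) mod 7}) for i = 0,…,6 where u₀ = v′₀ and uᵢ = vᵢ for i = 1,…,6, (a) any two adjacent edges meet exactly in their common vertex: eᵢ ∩ e_{(i+1) mod 7} = {u_{(i+1) mod 7}} for all i; and (b) any two non-adjacent edges are disjoint: eᵢ ∩ e_j = ∅ whenever j is not congruent to i−1, i, or i+1 modulo 7. -/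
/-!
Each pair of non-adjacent edges is strictly separated by a plane, and for each pair of adjacent
edges `[uᵢ, uᵢ₊₁]`, `[uᵢ₊₁, uᵢ₊₂]` some linear functional strictly decreases along
`uᵢ, uᵢ₊₁, uᵢ₊₂`, which forces the two edges to meet only in `uᵢ₊₁`. The normals used have
four-decimal coordinates, so every inequality is a check in exact rational arithmetic. In a
7-gon the non-adjacent pairs are, up to order, `(i, i + 2)` and `(i, i + 3)`.
-/

/-- Points in Euclidean 3-space. -/
local notation "ℝ³" => EuclideanSpace ℝ (Fin 3)

/-- The point of `ℝ³` with the given coordinates. -/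
noncomputable def pt (a b c : ℝ) : EuclideanSpace ℝ (Fin 3) :=
  (WithLp.equiv 2 (Fin 3 → ℝ)).symm ![a, b, c]

/-- The seven vertices of the perturbed control polygon `𝒫₂` of the paper's
main example: the vertex `v₀ = (1.9817, −1.7646, −4.5897)` has been perturbed
to `v′₀ = (1.3076, −3.3320, −2.5072)`, the other six vertices are unchanged. -/
noncomputable def P2vertex : Fin 7 → EuclideanSpace ℝ (Fin 3) :=
  ![pt 1.3076 (-3.3320) (-2.5072),
    pt (-1.3841185) 4.6825505 0.913541,
    pt (-3.2983075) (-4.0566825) 2.686189,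
    pt (-0.1232995) 2.768254 (-2.463584),
    pt 3.9079915 (-4.533357) 1.2263705,
    pt (-3.935983) (-0.438272) (-0.983365),
    pt 3.218174 4.296123 2.1124595]

/-- The edges of the closed polygon `𝒫₂`. -/
noncomputable def P2edge (i : Fin 7) : Set (EuclideanSpace ℝ (Fin 3)) :=
  segment ℝ (P2vertex i) (P2vertex (i + 1))

section LinearFunctional

variable {E : Type*} [AddCommGroup E] [Module ℝ E]

theorem disjoint_segment_of_max_lt_min (f : E →ₗ[ℝ] ℝ) {a b c d : E}
    (h : max (f a) (f b) < min (f c) (f d)) : Disjoint (segment ℝ a b) (segment ℝ c d) := by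
  rw [max_lt_iff, lt_min_iff, lt_min_iff] at h
  refine Set.disjoint_of_subset
    ((convex_halfSpace_le f.isLinear (max (f a) (f b))).segment_subset
      (le_max_left (f a) (f b)) (le_max_right (f a) (f b)))
    ((convex_halfSpace_gt f.isLinear (max (f a) (f b))).segment_subset
      (max_lt h.1.1 h.2.1) (max_lt h.1.2 h.2.2)) ?_
  simp only [Set.disjoint_left, Set.mem_ofPred_eq, not_lt]
  exact fun _ => id

theorem segment_inter_segment_eq_singleton (f : E →ₗ[ℝ] ℝ) {a b c : E}
    (hab : f b < f a) (hbc : f c < f b) : segment ℝ a b ∩ segment ℝ b c = {b} := by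
  refine Set.eq_singleton_iff_unique_mem.2
    ⟨⟨right_mem_segment ℝ a b, left_mem_segment ℝ b c⟩, ?_⟩
  rintro _ ⟨⟨s, t, hs, -, hst, rfl⟩, hx⟩
  obtain rfl : t = 1 - s := by linarith
  have hle : f (s • a + (1 - s) • b) ≤ f b :=
    (convex_halfSpace_le f.isLinear (f b)).segment_subset (le_refl (f b)) hbc.le hx
  have hs_mul : s * (f a - f b) ≤ 0 := by
    simp only [map_add, map_smul, smul_eq_mul] at hle
    linarith
  obtain rfl : s = 0 := le_antisymm (nonpos_of_mul_nonpos_left hs_mul (sub_pos.2 hab)) hs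
  simp

end LinearFunctional

theorem fin_seven_eq_add_two_or_add_three {i j : Fin 7}
    (h₁ : j ≠ i - 1) (h₂ : j ≠ i) (h₃ : j ≠ i + 1) :
    j = i + 2 ∨ j = i + 3 ∨ i = j + 2 ∨ i = j + 3 := by
  revert i j
  decide

@[simp] theorem inner_pt (a b c x y z : ℝ) :
    inner ℝ (pt a b c) (pt x y z) = a * x + b * y + c * z := by
  simp [pt, PiLp.inner_apply, Fin.sum_univ_three]
  ring

noncomputable def P2normalSucc : Fin 7 → ℝ³ :=
  ![pt 0.505 0.0795 (-0.5694), pt (-0.1382) 0.2099 0.3703, pt (-0.7901) 0.0523 0.1601,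
    pt 0.418 0.3516 (-0.1623), pt 0.0756 (-0.9681) (-0.0972), pt (-0.5749) 0.3173 0.1671,
    pt 0.5046 (-0.0424) 0.1315]

noncomputable def P2normalAddTwo : Fin 7 → ℝ³ :=
  ![pt (-0.8219) (-0.052) (-0.5673), pt 0.3651 (-0.2615) (-0.8935),
    pt (-0.088) (-0.5692) (-0.8175), pt (-0.48) 0.1718 0.8603, pt 0.4224 0.3825 (-0.8218),
    pt 0.1364 0.4292 (-0.8928), pt (-0.975) 0.2196 0.0349]

noncomputable def P2normalAddThree : Fin 7 → ℝ³ :=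
  ![pt 0.8919 0.3994 (-0.2123), pt 0.1571 (-0.2226) (-0.9622), pt (-0.6109) 0.6298 0.4797,
    pt 0.8312 0.153 (-0.5345), pt 0.4653 0.474 (-0.7475), pt (-0.5408) 0.2729 0.7956,
    pt (-0.9353) 0.3189 (-0.1532)]

theorem P2edge_inter_succ (i : Fin 7) : P2edge i ∩ P2edge (i + 1) = {P2vertex (i + 1)} :=
  segment_inter_segment_eq_singleton (innerₗ ℝ³ (P2normalSucc i))
    (by fin_cases i <;> simp [P2normalSucc, P2vertex] <;> norm_num)
    (by fin_cases i <;> simp [P2normalSucc, P2vertex] <;> norm_num)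

theorem P2edge_inter_add_two (i : Fin 7) : P2edge i ∩ P2edge (i + 2) = ∅ :=
  Set.disjoint_iff_inter_eq_empty.1 <|
    disjoint_segment_of_max_lt_min (innerₗ ℝ³ (P2normalAddTwo i))
      (by fin_cases i <;> simp [P2normalAddTwo, P2vertex] <;> norm_num)

theorem P2edge_inter_add_three (i : Fin 7) : P2edge i ∩ P2edge (i + 3) = ∅ :=
  Set.disjoint_iff_inter_eq_empty.1 <|
    disjoint_segment_of_max_lt_min (innerₗ ℝ³ (P2normalAddThree i))
      (by fin_cases i <;> simp [P2normalAddThree, P2vertex] <;> norm_num)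

/-- The perturbed control polygon `𝒫₂` is simple: adjacent edges meet exactly
in their common vertex, and non-adjacent edges are disjoint. -/
theorem P2_is_simple :
    (∀ i : Fin 7, P2edge i ∩ P2edge (i + 1) = {P2vertex (i + 1)})
    ∧
    (∀ i j : Fin 7, j ≠ i - 1 → j ≠ i → j ≠ i + 1 → P2edge i ∩ P2edge j = ∅) := by
  refine ⟨P2edge_inter_succ, fun i j h₁ h₂ h₃ => ?_⟩
  rcases fin_seven_eq_add_two_or_add_three h₁ h₂ h₃ with rfl | rfl | rfl | rfl
  · exact P2edge_inter_add_two i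
  · exact P2edge_inter_add_three i
  · rw [Set.inter_comm]
    exact P2edge_inter_add_two j
  · rw [Set.inter_comm]
    exact P2edge_inter_add_three j
end
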